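/- If gcd(n,a) = 1, then the number of ordered pairs (x,y) of positive integers with a/n = 1/x + 1/y equals the number of divisors u of n² satisfying u ≡ -n (mod a). -/

import Mathlib

/-!
Clearing denominators, `a/n = 1/x + 1/y` becomes `a x y = n (x + y)`, and multiplying by `a`
and completing the product gives `(a x - n)(a y - n) = n²`. So `u = a x - n` is a divisor of `n²`
with `u ≡ -n (mod a)`. Conversely such a `u` has cofactor `v = n²/u` with `v ≡ -n (mod a)` as
well, because `n (v + n) = v (u + n)` and `n` is invertible modulo `a`; then
`x = (u + n)/a`, `y = (v + n)/a` is a solution.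
-/

variable {a n x y u v : ℕ}

theorem div_eq_one_div_add_one_div_iff (hn : 0 < n) (hx : 0 < x) (hy : 0 < y) :
    (a : ℚ) / n = 1 / x + 1 / y ↔ a * x * y = n * (x + y) := by
  rw [div_add_div _ _ (by positivity) (by positivity),
    div_eq_div_iff (by positivity) (by positivity)]
  norm_cast
  constructor <;> intro h <;> linarith

theorem lt_mul_of_mul_mul_eq_mul_add (hn : 0 < n) (hx : 0 < x) (hy : 0 < y)
    (h : a * x * y = n * (x + y)) : n < a * x ∧ n < a * y := by
  constructor
  · refine Nat.lt_of_mul_lt_mul_right (a := y) ?_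
    rw [h, mul_add]
    exact Nat.lt_add_of_pos_left (by positivity)
  · refine Nat.lt_of_mul_lt_mul_right (a := x) ?_
    rw [mul_right_comm, h, mul_add]
    exact Nat.lt_add_of_pos_right (by positivity)

theorem sub_mul_sub_eq_sq_of_mul_mul_eq_mul_add (hx : n < a * x) (hy : n < a * y)
    (h : a * x * y = n * (x + y)) : (a * x - n) * (a * y - n) = n ^ 2 := by
  zify [hx.le, hy.le] at h ⊢
  linear_combination a * h

theorem mul_mul_eq_mul_add_of_mul_eq_sq (ha : 0 < a) (huv : u * v = n ^ 2) (hx : a * x = u + n)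
    (hy : a * y = v + n) : a * x * y = n * (x + y) := by
  apply Nat.eq_of_mul_eq_mul_left ha
  zify at huv hx hy ⊢
  linear_combination (a * y - n) * hx + u * hy + huv

theorem dvd_add_of_mul_eq_sq (hcop : n.Coprime a) (huv : u * v = n ^ 2) (hu : a ∣ u + n) :
    a ∣ v + n := by
  have hv : n * (v + n) = v * (u + n) := by rw [mul_add, ← sq, ← huv]; ring
  exact hcop.symm.dvd_of_dvd_mul_left (hv ▸ dvd_mul_of_dvd_right hu v)

theorem Int.natCast_modEq_neg_iff_dvd_add : (u : ℤ) ≡ -(n : ℤ) [ZMOD a] ↔ a ∣ u + n := by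
  rw [Int.modEq_iff_dvd, ← Int.natCast_dvd_natCast, Nat.cast_add, ← dvd_neg, neg_sub,
    sub_neg_eq_add]

def positiveSolutionsEquivDivisors (ha : 0 < a) (hn : 0 < n) (hcop : n.Coprime a) :
    {p : ℕ × ℕ | 0 < p.1 ∧ 0 < p.2 ∧ a * p.1 * p.2 = n * (p.1 + p.2)} ≃
      (n ^ 2).divisors.filter (a ∣ · + n) where
  toFun p := ⟨a * p.1.1 - n, by
    obtain ⟨⟨x, y⟩, hx, hy, h⟩ := p
    dsimp only at hx hy h ⊢
    obtain ⟨hnx, hny⟩ := lt_mul_of_mul_mul_eq_mul_add hn hx hy h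
    refine Finset.mem_filter.2 ⟨Nat.mem_divisors.2 ⟨?_, by positivity⟩, ?_⟩
    · exact ⟨_, (sub_mul_sub_eq_sq_of_mul_mul_eq_mul_add hnx hny h).symm⟩
    · simp [Nat.sub_add_cancel hnx.le]⟩
  invFun u := ⟨((u + n) / a, (n ^ 2 / u + n) / a), by
    obtain ⟨u, hu⟩ := u
    obtain ⟨⟨hdvd, -⟩, hun⟩ := Finset.mem_filter.1 hu |>.imp_left Nat.mem_divisors.1
    have huv : u * (n ^ 2 / u) = n ^ 2 := Nat.mul_div_cancel' hdvd
    have hvn := dvd_add_of_mul_eq_sq hcop huv hun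
    refine ⟨Nat.div_pos (Nat.le_of_dvd (Nat.add_pos_right _ hn) hun) ha,
      Nat.div_pos (Nat.le_of_dvd (Nat.add_pos_right _ hn) hvn) ha, ?_⟩
    exact mul_mul_eq_mul_add_of_mul_eq_sq ha huv (Nat.mul_div_cancel' hun)
      (Nat.mul_div_cancel' hvn)⟩
  left_inv p := by
    obtain ⟨⟨x, y⟩, hx, hy, h⟩ := p
    dsimp only at hx hy h ⊢
    obtain ⟨hnx, hny⟩ := lt_mul_of_mul_mul_eq_mul_add hn hx hy h
    have hsq := sub_mul_sub_eq_sq_of_mul_mul_eq_mul_add hnx hny h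
    have hv : n ^ 2 / (a * x - n) = a * y - n :=
      Nat.div_eq_of_eq_mul_right (by omega) (by rw [← hsq, mul_comm])
    ext <;> simp [Nat.sub_add_cancel hnx.le, Nat.sub_add_cancel hny.le, hv, ha.ne']
  right_inv u := by
    obtain ⟨u, hu⟩ := u
    simp [Nat.mul_div_cancel' (Finset.mem_filter.1 hu).2]

/-- If `gcd(n, a) = 1`, the number of ordered pairs `(x, y)` of positive integers with
`a/n = 1/x + 1/y` equals the number of divisors `u` of `n²` with `u ≡ -n (mod a)`. -/
theorem binary_egyptian_fraction_count_divisors (a n : ℕ) (ha : 0 < a) (hn : 0 < n)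
    (hcop : Nat.gcd n a = 1) :
    Nat.card {p : ℕ × ℕ | 0 < p.1 ∧ 0 < p.2 ∧ (a : ℚ) / n = 1 / p.1 + 1 / p.2} =
      ((n ^ 2).divisors.filter (fun u : ℕ => (u : ℤ) ≡ -(n : ℤ) [ZMOD a])).card := by
  have hsolutions : {p : ℕ × ℕ | 0 < p.1 ∧ 0 < p.2 ∧ (a : ℚ) / n = 1 / p.1 + 1 / p.2} =
      {p : ℕ × ℕ | 0 < p.1 ∧ 0 < p.2 ∧ a * p.1 * p.2 = n * (p.1 + p.2)} :=
    Set.ext fun _ => and_congr_right fun hx => and_congr_right fun hy =>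
      div_eq_one_div_add_one_div_iff hn hx hy
  simp only [hsolutions, Int.natCast_modEq_neg_iff_dvd_add]
  rw [Nat.card_congr (positiveSolutionsEquivDivisors ha hn hcop), Nat.card_eq_finsetCard]
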